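/- arXiv:2003.06963 — 3 statements merged into one kernel-verified Lean document; each statement's English description precedes it below -/
import Mathlib

section
/- For the counterexample system, the sampled-data derivative of h satisfies the ISSf-BF bound: for all x, e ∈ ℝ² with ‖x‖ ≤ r, we have -‖x‖²·(1 - ‖x+e‖²) ≥ -(1 - ‖x‖²) - 2r³‖e‖. -/
/-! Writing `a = ‖x‖`, `s = ‖e‖`, `t = ⟪x, e⟫`, the difference of the two sides is
`(1 - a²)² + 2a²(t + as) + a²s² + 2s(r³ - a³)`, a sum of nonnegative terms by Cauchy–Schwarz
and `a ≤ r`. -/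

lemma neg_sq_mul_one_sub_ge {a s t r : ℝ} (ha : 0 ≤ a) (har : a ≤ r) (hs : 0 ≤ s)
    (ht : -(a * s) ≤ t) :
    -a ^ 2 * (1 - (a ^ 2 + 2 * t + s ^ 2)) ≥ -(1 - a ^ 2) - 2 * r ^ 3 * s := by
  have hcs : 0 ≤ a ^ 2 * (t + a * s) := mul_nonneg (sq_nonneg a) (by linarith)
  have key : -a ^ 2 * (1 - (a ^ 2 + 2 * t + s ^ 2)) - (-(1 - a ^ 2) - 2 * r ^ 3 * s) =
      (1 - a ^ 2) ^ 2 + 2 * (a ^ 2 * (t + a * s)) + (a * s) ^ 2 + 2 * s * (r ^ 3 - a ^ 3) := by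
    ring
  have hcube : 0 ≤ 2 * s * (r ^ 3 - a ^ 3) :=
    mul_nonneg (by positivity) (sub_nonneg.2 (pow_le_pow_left₀ ha har 3))
  linarith [sq_nonneg (1 - a ^ 2), sq_nonneg (a * s)]

theorem stmt3_general (r : ℝ) (x e : EuclideanSpace ℝ (Fin 2))
    (hx : ‖x‖ ≤ r) :
    -‖x‖ ^ 2 * (1 - ‖x + e‖ ^ 2) ≥ -(1 - ‖x‖ ^ 2) - 2 * r ^ 3 * ‖e‖ := by
  rw [norm_add_sq_real]
  exact neg_sq_mul_one_sub_ge (norm_nonneg x) hx (norm_nonneg e)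
    (neg_le_of_abs_le (abs_real_inner_le_norm x e))

/-- ISSf-BF bound for the sampled-data counterexample. -/
theorem stmt3 (r : ℝ) (hr : 1 ≤ r) (x e : EuclideanSpace ℝ (Fin 2))
    (hx : ‖x‖ ≤ r) :
    -‖x‖ ^ 2 * (1 - ‖x + e‖ ^ 2) ≥ -(1 - ‖x‖ ^ 2) - 2 * r ^ 3 * ‖e‖ :=
  stmt3_general r x e hx
end

section
/- Suppose the closed-loop dynamics satisfy ‖f(x(t), k(x(t_i)))‖ ≤ F for all t, and the error e(t) = x(t_i) - x(t) satisfies ė(t) = -f(x(t), k(x(t_i))) with e(t_i) = 0. If the next event time is defined by t_{i+1} = min{ t ≥ t_i : ι(‖e(t)‖) = c } where c ≥ σd > 0 and ι is Lipschitz with constant L_ι and ι(0) = 0, then t_{i+1} - t_i ≥ σd/(L_ι F). -/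
/-- minimum interevent time bound. -/
theorem stmt11 {n : ℕ} (e : ℝ → EuclideanSpace ℝ (Fin n))
    (f : ℝ → EuclideanSpace ℝ (Fin n))
    (ι : ℝ → ℝ) (F d σ L c tᵢ tnext : ℝ)
    (hF : 0 < F) (hd : 0 < d) (hσ : 0 < σ) (hL : 0 < L)
    (hde : ∀ t : ℝ, HasDerivAt e (-(f t)) t)
    (hfb : ∀ t : ℝ, ‖f t‖ ≤ F)
    (he0 : e tᵢ = 0)
    (hιLip : ∀ a b : ℝ, |ι a - ι b| ≤ L * |a - b|) (hι0 : ι 0 = 0)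
    (hc : σ * d ≤ c)
    (hmin : tnext = sInf {t : ℝ | tᵢ ≤ t ∧ ι ‖e t‖ = c})
    (hattained : tᵢ ≤ tnext ∧ ι ‖e tnext‖ = c) :
    tnext - tᵢ ≥ σ * d / (L * F) := by
  have key : ‖e tnext - e tᵢ‖ ≤ F * ‖tnext - tᵢ‖ := by
    apply (convex_univ (𝕜 := ℝ)).norm_image_sub_le_of_norm_hasDerivWithin_le
      (f' := fun t => -(f t)) (fun t _ => (hde t).hasDerivWithinAt)
      (fun t _ => by simpa using hfb t) (Set.mem_univ _) (Set.mem_univ _)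
  have hnorm : ‖e tnext‖ ≤ F * (tnext - tᵢ) := by
    rw [he0, sub_zero] at key
    rwa [Real.norm_of_nonneg (by linarith [hattained.1])] at key
  have h1 : c ≤ L * ‖e tnext‖ := by
    have := hιLip ‖e tnext‖ 0
    rw [hι0, sub_zero, sub_zero, hattained.2, abs_of_nonneg (norm_nonneg _)] at this
    calc c ≤ |c| := le_abs_self c
    _ ≤ L * ‖e tnext‖ := this
  have h2 : σ * d ≤ L * F * (tnext - tᵢ) := by
    nlinarith [norm_nonneg (e tnext)]
  rw [ge_iff_le, div_le_iff₀ (by positivity)]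
  linarith
end

section
/- For the counterexample closed-loop system with sampled control, on each interval [t_i, t_{i+1}) one has d/dt h(x(t)) = -h(x(t_i))·exp(h(x(t_i))·(t - t_i))·‖x(t_i)‖², which is nonpositive whenever x(t_i) lies in the safe set (h(x(t_i)) ≥ 0); therefore t ↦ h(x(t)) is monotonically nonincreasing on [t_i, t_{i+1}). -/
/-! Rotation preserves `x₁² + x₂²` and `exp (hᵢ (t - tᵢ) / 2)` squares to `exp (hᵢ (t - tᵢ))`, so
along the flow `h (x t) = 1 - exp (hᵢ (t - tᵢ)) ‖xᵢ‖²`. Its derivative is `≤ 0` for every `t` once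
`hᵢ ≥ 0`, so `h ∘ x` is antitone on all of `ℝ`, not only on `[tᵢ, tₙₑₓₜ)`. -/

open Real

theorem rotate_sq_add_sq (θ a b : ℝ) :
    (cos θ * a + sin θ * b) ^ 2 + (-sin θ * a + cos θ * b) ^ 2 = a ^ 2 + b ^ 2 := by
  linear_combination (a ^ 2 + b ^ 2) * sin_sq_add_cos_sq θ

theorem exp_half_mul_rotate_sq_add_sq (k θ a b : ℝ) :
    (exp (k / 2) * (cos θ * a + sin θ * b)) ^ 2 + (exp (k / 2) * (-sin θ * a + cos θ * b)) ^ 2 =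
      exp k * (a ^ 2 + b ^ 2) := by
  have exp_half_sq : exp (k / 2) ^ 2 = exp k := by rw [← exp_nat_mul]; congr 1; ring
  rw [mul_pow, mul_pow, ← mul_add, rotate_sq_add_sq, exp_half_sq]

theorem hasDerivAt_one_sub_exp_mul_sub_mul (c s r t : ℝ) :
    HasDerivAt (fun t => 1 - exp (c * (t - s)) * r) (-c * exp (c * (t - s)) * r) t := by
  have hlin : HasDerivAt (fun t => c * (t - s)) c t := by
    simpa using ((hasDerivAt_id t).sub_const s).const_mul c
  exact ((hlin.exp.mul_const r).const_sub 1).congr_deriv (by ring)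

theorem neg_mul_exp_mul_nonpos {c r : ℝ} (hc : 0 ≤ c) (hr : 0 ≤ r) (u : ℝ) :
    -c * exp u * r ≤ 0 := by
  have : 0 ≤ c * exp u * r := by positivity
  linarith

/-- explicit derivative of h along the sampled-data counterexample flow. -/
theorem stmt15 (x₁ x₂ tᵢ tnext : ℝ) :
    let hᵢ : ℝ := 1 - (x₁ ^ 2 + x₂ ^ 2)
    let X : ℝ → ℝ × ℝ := fun t =>
      (Real.exp (hᵢ * (t - tᵢ) / 2) *
          (Real.cos (t - tᵢ) * x₁ + Real.sin (t - tᵢ) * x₂),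
       Real.exp (hᵢ * (t - tᵢ) / 2) *
          (-Real.sin (t - tᵢ) * x₁ + Real.cos (t - tᵢ) * x₂))
    let H : ℝ → ℝ := fun t => 1 - ((X t).1 ^ 2 + (X t).2 ^ 2)
    (∀ t : ℝ, HasDerivAt H
        (-hᵢ * Real.exp (hᵢ * (t - tᵢ)) * (x₁ ^ 2 + x₂ ^ 2)) t) ∧
    (0 ≤ hᵢ → ∀ t : ℝ,
        -hᵢ * Real.exp (hᵢ * (t - tᵢ)) * (x₁ ^ 2 + x₂ ^ 2) ≤ 0) ∧
    (0 ≤ hᵢ → AntitoneOn H (Set.Ico tᵢ tnext)) := by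
  intro hᵢ X H
  have hH : H = fun t => 1 - exp (hᵢ * (t - tᵢ)) * (x₁ ^ 2 + x₂ ^ 2) := by
    funext t
    simp only [H, X, exp_half_mul_rotate_sq_add_sq]
  have hderiv : ∀ t, HasDerivAt H (-hᵢ * exp (hᵢ * (t - tᵢ)) * (x₁ ^ 2 + x₂ ^ 2)) t :=
    hH ▸ hasDerivAt_one_sub_exp_mul_sub_mul hᵢ tᵢ _
  have hnonpos : 0 ≤ hᵢ → ∀ t, -hᵢ * exp (hᵢ * (t - tᵢ)) * (x₁ ^ 2 + x₂ ^ 2) ≤ 0 :=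
    fun h0 t => neg_mul_exp_mul_nonpos h0 (by positivity) _
  exact ⟨hderiv, hnonpos,
    fun h0 => (antitone_of_hasDerivAt_nonpos hderiv (hnonpos h0)).antitoneOn _⟩
end
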